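/- Fix i ∈ I and let Q^i be a probability satisfying the valuation identity for asset i. Then for every stopping time T, the value of the American contract paying the asset itself satisfies sup over stopping times τ with 0 ≤ τ ≤ T of E_P[Y_τ S^i_τ ; τ < ζ] = S^i_0; in particular one has S^i_0 Q^i[τ < ζ] = E_P[Y_τ S^i_τ ; τ < ζ] for each such τ, and Q^i[ζ > 0] = 1. -/

import Mathlib

open MeasureTheory Filter Set
open scoped NNReal ENNReal

noncomputable section

namespace ExchangeOptions

variable {Ω : Type*} {m : MeasurableSpace Ω}

/-- An extended (possibly infinite-valued) stopping time for the filtration `F`. -/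
def IsExtStoppingTime (F : Filtration ℝ≥0 m) (τ : Ω → ℝ≥0∞) : Prop :=
  ∀ t : ℝ≥0, MeasurableSet[F t] {ω | τ ω ≤ (t : ℝ≥0∞)}

/-- The σ-algebra `F_τ` at an extended stopping time `τ`. -/
def IsExtStoppingTime.measurableSpace {F : Filtration ℝ≥0 m} {τ : Ω → ℝ≥0∞}
    (hτ : IsExtStoppingTime F τ) : MeasurableSpace Ω where
  MeasurableSet' A := ∀ t : ℝ≥0, MeasurableSet[F t] (A ∩ {ω | τ ω ≤ (t : ℝ≥0∞)})
  measurableSet_empty := fun t => by simp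
  measurableSet_compl := fun A hA t => by
    have h : Aᶜ ∩ {ω | τ ω ≤ (t : ℝ≥0∞)} =
        {ω | τ ω ≤ (t : ℝ≥0∞)} \ (A ∩ {ω | τ ω ≤ (t : ℝ≥0∞)}) := by
      ext ω; by_cases h : ω ∈ A <;> simp [h]
    rw [h]
    exact (hτ t).diff (hA t)
  measurableSet_iUnion := fun s hs t => by
    rw [Set.iUnion_inter]
    exact MeasurableSet.iUnion fun n => hs n t

/-- The σ-algebra `F_{τ-}`, generated by `F_0` together with all sets
`A ∩ {s < τ}` where `s : ℝ≥0` and `A ∈ F_s`. -/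
def sigmaPre (F : Filtration ℝ≥0 m) (τ : Ω → ℝ≥0∞) : MeasurableSpace Ω :=
  (F 0 : MeasurableSpace Ω) ⊔ MeasurableSpace.generateFrom
    {B | ∃ (s : ℝ≥0) (A : Set Ω), MeasurableSet[F s] A ∧ B = A ∩ {ω | (s : ℝ≥0∞) < τ ω}}

/-- Evaluation of a process at an extended stopping time (junk value at `∞`). -/
def ev (X : ℝ≥0 → Ω → ℝ) (τ : Ω → ℝ≥0∞) (ω : Ω) : ℝ := X (τ ω).toNNReal ω

/-- The underlying financial model, together with the standing assumptions:
nonnegative adapted assets `S i` vanishing from the default time `ζ` onwards, with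
strictly positive a.s.-constant initial values `S0 i`; a nonnegative stochastic discount
factor `Y` with `Y_0 = 1` a.s.; and a sequence `ζn` of stopping times nicely approximating
the default time such that every stopped process `(Y_{ζn ∧ t} S^i_{ζn ∧ t})_t` is a
`P`-a.s. càdlàg martingale.  The probability `P` lives on `F_∞ = ⨆ t, F t`. -/
structure Model (ι : Type*) {Ω : Type*} {m : MeasurableSpace Ω}
    (F : Filtration ℝ≥0 m) (P : Measure Ω) where
  S : ι → ℝ≥0 → Ω → ℝ
  Y : ℝ≥0 → Ω → ℝ
  S0 : ι → ℝ
  ζ : Ω → ℝ≥0∞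
  ζn : ℕ → Ω → ℝ≥0
  nonempty : Nonempty ι
  hFinf : (⨆ t : ℝ≥0, (F t : MeasurableSpace Ω)) = m
  hP : IsProbabilityMeasure P
  hζ : IsExtStoppingTime F ζ
  S_nonneg : ∀ i t ω, 0 ≤ S i t ω
  S_adapted : ∀ i, Adapted F (S i)
  S_default : ∀ i (t : ℝ≥0) ω, ζ ω ≤ (t : ℝ≥0∞) → S i t ω = 0
  S0_pos : ∀ i, 0 < S0 i
  S0_eq : ∀ i, ∀ᵐ ω ∂P, S i 0 ω = S0 i
  Y_nonneg : ∀ t ω, 0 ≤ Y t ω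
  Y0 : ∀ᵐ ω ∂P, Y 0 ω = 1
  ζn_stop : ∀ n, IsStoppingTime F (fun ω => ((ζn n ω : ℝ≥0) : WithTop ℝ≥0))
  ζn_mono : ∀ ω, Monotone fun n => ζn n ω
  ζn_le : ∀ (n : ℕ) ω, ζn n ω ≤ (n : ℝ≥0)
  ζn_tendsto : ∀ ω, Tendsto (fun n => (ζn n ω : ℝ≥0∞)) atTop (nhds (ζ ω))
  mart : ∀ (n : ℕ) (i : ι),
    Martingale (fun t ω => Y (min (ζn n ω) t) ω * S i (min (ζn n ω) t) ω) F P
  cadlag : ∀ (n : ℕ) (i : ι), ∀ᵐ ω ∂P,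
    (∀ t : ℝ≥0, ContinuousWithinAt
      (fun s => Y (min (ζn n ω) s) ω * S i (min (ζn n ω) s) ω) (Set.Ici t) t) ∧
    (∀ t : ℝ≥0, 0 < t → ∃ l : ℝ, Tendsto
      (fun s => Y (min (ζn n ω) s) ω * S i (min (ζn n ω) s) ω)
      (nhdsWithin t (Set.Iio t)) (nhds l))

variable {ι : Type*} {F : Filtration ℝ≥0 m} {P : Measure Ω}

/-- `Q` satisfies the valuation identity for asset `i`:  `Q` is a probability and, for every
extended stopping time `T` and nonnegative `F_T`-measurable `ξ`,
`E_P[Y_T S^i_T ξ ; T < ζ] = S^i_0 E_Q[ξ ; T < ζ]`. -/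
def Model.ValId (M : Model ι F P) (i : ι) (Q : Measure Ω) : Prop :=
  IsProbabilityMeasure Q ∧
  ∀ (T : Ω → ℝ≥0∞) (hT : IsExtStoppingTime F T) (ξ : Ω → ℝ≥0∞),
    Measurable[hT.measurableSpace] ξ →
    ∫⁻ ω in {ω | T ω < M.ζ ω}, ENNReal.ofReal (ev M.Y T ω * ev (M.S i) T ω) * ξ ω ∂P
      = ENNReal.ofReal (M.S0 i) * ∫⁻ ω in {ω | T ω < M.ζ ω}, ξ ω ∂Q

/-- The asset-price ratio process `R^{ij} = (S^i / S^j) 1_{S^j > 0}`. -/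
def Model.R (M : Model ι F P) (i j : ι) (t : ℝ≥0) (ω : Ω) : ℝ :=
  if 0 < M.S j t ω then M.S i t ω / M.S j t ω else 0

/-- `ρ^{ij} = liminf_n R^{ij}_{ζ_n}` (computed in `ℝ≥0∞`). -/
def Model.rho (M : Model ι F P) (i j : ι) (ω : Ω) : ℝ≥0∞ :=
  Filter.liminf (fun n => ENNReal.ofReal (M.R i j (M.ζn n ω) ω)) atTop

/-- The value `EX^{ij}(T) = E_P[Y_T (S^j_T − S^i_T)_+ ; T < ζ]` of the European option to
exchange asset `i` for asset `j` at time `T`. -/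
def Model.EX (M : Model ι F P) (i j : ι) (T : Ω → ℝ≥0∞) : ℝ≥0∞ :=
  ∫⁻ ω in {ω | T ω < M.ζ ω},
    ENNReal.ofReal (ev M.Y T ω * max (ev (M.S j) T ω - ev (M.S i) T ω) 0) ∂P

/-- The value `AX^{ij}(T) = sup_{τ ≤ T} EX^{ij}(τ)` of the American option to exchange
asset `i` for asset `j` up to time `T`; the supremum is over stopping times `τ ≤ T`. -/
def Model.AX (M : Model ι F P) (i j : ι) (T : Ω → ℝ≥0∞) : ℝ≥0∞ :=
  ⨆ (τ : Ω → ℝ≥0∞) (_ : IsExtStoppingTime F τ) (_ : ∀ ω, τ ω ≤ T ω), M.EX i j τ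


theorem isExtStoppingTime_const (F : Filtration ℝ≥0 m) (c : ℝ≥0∞) :
    IsExtStoppingTime F (fun _ : Ω => c) :=
  fun _ => MeasurableSet.const _

namespace Model

theorem ae_zero_lt_ζ (M : Model ι F P) : ∀ᵐ ω ∂P, 0 < M.ζ ω := by
  obtain ⟨i⟩ := M.nonempty
  filter_upwards [M.S0_eq i] with ω hS
  by_contra! hζ
  have hdefault := M.S_default i 0 ω (by simpa using hζ)
  exact (M.S0_pos i).ne' (hS.symm.trans hdefault)

theorem lintegral_value_at_zero (M : Model ι F P) (i : ι) :
    ∫⁻ ω in {ω | (0 : ℝ≥0∞) < M.ζ ω},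
        ENNReal.ofReal (ev M.Y (fun _ => 0) ω * ev (M.S i) (fun _ => 0) ω) ∂P
      = ENNReal.ofReal (M.S0 i) := by
  have := M.hP
  have hset : {ω | (0 : ℝ≥0∞) < M.ζ ω} =ᵐ[P] (univ : Set Ω) :=
    eventuallyEq_univ.mpr M.ae_zero_lt_ζ
  have hintegrand :
      (fun ω => ENNReal.ofReal (ev M.Y (fun _ => 0) ω * ev (M.S i) (fun _ => 0) ω))
        =ᵐ[P] fun _ => ENNReal.ofReal (M.S0 i) := by
    filter_upwards [M.S0_eq i, M.Y0] with ω hS hY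
    simp [ev, hS, hY]
  rw [Measure.restrict_congr_set hset, Measure.restrict_univ, lintegral_congr_ae hintegrand,
    lintegral_const, measure_univ, mul_one]

theorem ValId.lintegral_eq {M : Model ι F P} {i : ι} {Q : Measure Ω} (hQ : M.ValId i Q)
    {τ : Ω → ℝ≥0∞} (hτ : IsExtStoppingTime F τ) :
    ∫⁻ ω in {ω | τ ω < M.ζ ω}, ENNReal.ofReal (ev M.Y τ ω * ev (M.S i) τ ω) ∂P
      = ENNReal.ofReal (M.S0 i) * Q {ω | τ ω < M.ζ ω} := by
  simpa using hQ.2 τ hτ (fun _ => 1) measurable_const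

theorem ValId.measure_zero_lt_ζ {M : Model ι F P} {i : ι} {Q : Measure Ω}
    (hQ : M.ValId i Q) : Q {ω | 0 < M.ζ ω} = 1 := by
  have h := (hQ.lintegral_eq (isExtStoppingTime_const F 0)).symm.trans
    (M.lintegral_value_at_zero i)
  have hS0 : ENNReal.ofReal (M.S0 i) ≠ 0 := ENNReal.ofReal_ne_zero_iff.mpr (M.S0_pos i)
  exact (ENNReal.mul_right_inj hS0 ENNReal.ofReal_ne_top).mp (h.trans (mul_one _).symm)

end Model

theorem stmt19_general {Ω ι : Type*} {m : MeasurableSpace Ω} {F : Filtration ℝ≥0 m} {P : Measure Ω}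
    (M : Model ι F P) (i : ι) (Qi : Measure Ω) (hQi : M.ValId i Qi)
    (T : Ω → ℝ≥0∞) :
    (⨆ (τ : Ω → ℝ≥0∞) (_ : IsExtStoppingTime F τ) (_ : ∀ ω, τ ω ≤ T ω),
        ∫⁻ ω in {ω | τ ω < M.ζ ω}, ENNReal.ofReal (ev M.Y τ ω * ev (M.S i) τ ω) ∂P)
      = ENNReal.ofReal (M.S0 i) ∧
    (∀ (τ : Ω → ℝ≥0∞), IsExtStoppingTime F τ → (∀ ω, τ ω ≤ T ω) →
      ENNReal.ofReal (M.S0 i) * Qi {ω | τ ω < M.ζ ω}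
        = ∫⁻ ω in {ω | τ ω < M.ζ ω}, ENNReal.ofReal (ev M.Y τ ω * ev (M.S i) τ ω) ∂P) ∧
    Qi {ω | 0 < M.ζ ω} = 1 := by
  have := hQi.1
  refine ⟨le_antisymm ?_ ?_, fun τ hτ _ => (hQi.lintegral_eq hτ).symm, hQi.measure_zero_lt_ζ⟩
  · refine iSup_le fun τ => iSup₂_le fun hτ _ => ?_
    rw [hQi.lintegral_eq hτ]
    exact mul_le_of_le_one_right' prob_le_one
  · refine le_iSup₂_of_le (fun _ => 0) (isExtStoppingTime_const F 0) ?_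
    exact le_iSup_of_le (fun _ => zero_le) (M.lintegral_value_at_zero i).ge

/-- If `Q^i` satisfies the valuation identity for asset `i`, then for
every stopping time `T` the American contract paying the asset itself has value
`sup_{τ ≤ T} E_P[Y_τ S^i_τ ; τ < ζ] = S^i_0`; in particular
`S^i_0 Q^i[τ < ζ] = E_P[Y_τ S^i_τ ; τ < ζ]` for each stopping time `τ ≤ T`, and
`Q^i[ζ > 0] = 1`. -/
theorem stmt19 {Ω ι : Type*} {m : MeasurableSpace Ω} {F : Filtration ℝ≥0 m} {P : Measure Ω}
    (M : Model ι F P) (i : ι) (Qi : Measure Ω) (hQi : M.ValId i Qi)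
    (T : Ω → ℝ≥0∞) (hT : IsExtStoppingTime F T) :
    (⨆ (τ : Ω → ℝ≥0∞) (_ : IsExtStoppingTime F τ) (_ : ∀ ω, τ ω ≤ T ω),
        ∫⁻ ω in {ω | τ ω < M.ζ ω}, ENNReal.ofReal (ev M.Y τ ω * ev (M.S i) τ ω) ∂P)
      = ENNReal.ofReal (M.S0 i) ∧
    (∀ (τ : Ω → ℝ≥0∞), IsExtStoppingTime F τ → (∀ ω, τ ω ≤ T ω) →
      ENNReal.ofReal (M.S0 i) * Qi {ω | τ ω < M.ζ ω}
        = ∫⁻ ω in {ω | τ ω < M.ζ ω}, ENNReal.ofReal (ev M.Y τ ω * ev (M.S i) τ ω) ∂P) ∧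
    Qi {ω | 0 < M.ζ ω} = 1 :=
  stmt19_general M i Qi hQi T

end ExchangeOptions
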